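/- For all real numbers s, r, t with 0 ≤ r ≤ r + s ≤ t, we have -1 ≤ log⁺(r+s) − ((t−(r+s))/(t−r) · log⁺ r + s/(t−r) · log⁺ t) ≤ 1 + log⁺(min(s, t−r−s)), where log⁺ x := log(max(x,1)). -/

import Mathlib

/-!
On `[0, ∞)` the function `logPlus` is Mathlib's `log⁺` (`Real.posLog`), and
`log⁺ y ≤ log (1 + y) ≤ log 2 + log⁺ y`. Concavity of `y ↦ log (1 + y)` therefore makes `log⁺`
concave up to the additive constant `log 2 ≤ 1`, which is the lower bound. For the upper bound,
the gap at `x = r + s` is at most `log 2 + log⁺ s` because `log⁺ (r + s) ≤ log 2 + log⁺ r + log⁺ s`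
and the interpolant is at least `log⁺ r`; it is also at most `μ (log⁺ t - log⁺ r)` with
`μ = (t - x) / (t - r)`, and `log⁺ t - log⁺ r ≤ log 2 + log⁺ (t - r)`, so the elementary
inequality `v (1 + log⁺ w) ≤ w (1 + log⁺ v)` for `0 ≤ v ≤ w` bounds it by `1 + log⁺ (t - x)`.
-/

open Real

/-- `log⁺ x = log (max x 1)`. -/
noncomputable def logPlus (x : ℝ) : ℝ := Real.log (max x 1)

namespace Real

lemma log_two_le_one : log 2 ≤ 1 := by
  linarith [log_le_sub_one_of_pos (two_pos : (0 : ℝ) < 2)]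

lemma posLog_le_log_one_add {y : ℝ} (hy : 0 ≤ y) : log⁺ y ≤ log (1 + y) := by
  rw [posLog_eq_log_max_one hy]
  exact log_le_log (by positivity) (max_le (by linarith) (by linarith))

lemma log_one_add_le_log_two_add_posLog {y : ℝ} (hy : 0 ≤ y) : log (1 + y) ≤ log 2 + log⁺ y := by
  have h := posLog_add (x := 1) (y := y)
  rwa [posLog_one, add_zero, posLog_eq_log (by rw [abs_of_nonneg (by linarith)]; linarith)] at h

lemma mul_posLog_add_mul_posLog_le {a b μ ν : ℝ} (ha : 0 ≤ a) (hb : 0 ≤ b) (hμ : 0 ≤ μ)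
    (hν : 0 ≤ ν) (hμν : μ + ν = 1) :
    μ * log⁺ a + ν * log⁺ b ≤ log 2 + log⁺ (μ * a + ν * b) := by
  have hconc : μ * log (1 + a) + ν * log (1 + b) ≤ log (1 + (μ * a + ν * b)) := by
    have h := strictConcaveOn_log_Ioi.concaveOn.2 (x := 1 + a) (y := 1 + b)
      (by simp only [Set.mem_Ioi]; linarith) (by simp only [Set.mem_Ioi]; linarith) hμ hν hμν
    have hcomb : μ * (1 + a) + ν * (1 + b) = 1 + (μ * a + ν * b) := by linear_combination hμν
    simpa only [smul_eq_mul, hcomb] using h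
  calc μ * log⁺ a + ν * log⁺ b ≤ μ * log (1 + a) + ν * log (1 + b) := by
        gcongr
        · exact posLog_le_log_one_add ha
        · exact posLog_le_log_one_add hb
    _ ≤ log (1 + (μ * a + ν * b)) := hconc
    _ ≤ log 2 + log⁺ (μ * a + ν * b) := log_one_add_le_log_two_add_posLog (by positivity)

lemma posLog_sub_posLog_le {v w : ℝ} (hv : 0 < v) (hvw : v ≤ w) : log⁺ w - log⁺ v ≤ w / v - 1 := by
  have hq : 1 ≤ w / v := (one_le_div hv).2 hvw
  have hmul : log⁺ w ≤ log⁺ v + log⁺ (w / v) := by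
    simpa [mul_div_cancel₀ w hv.ne'] using posLog_mul (x := v) (y := w / v)
  have hlog : log⁺ (w / v) ≤ w / v - 1 := by
    rw [posLog_eq_log (by rwa [abs_of_nonneg (by linarith)])]
    exact log_le_sub_one_of_pos (by linarith)
  linarith

lemma mul_one_add_posLog_le {v w : ℝ} (hv : 0 ≤ v) (hvw : v ≤ w) :
    v * (1 + log⁺ w) ≤ w * (1 + log⁺ v) := by
  rcases hv.eq_or_lt with rfl | hv
  · simp only [zero_mul, posLog_zero, add_zero, mul_one]
    linarith
  have h := mul_le_mul_of_nonneg_left (posLog_sub_posLog_le hv hvw) hv.le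
  rw [mul_sub, mul_sub, mul_one, mul_div_cancel₀ w hv.ne'] at h
  nlinarith [posLog_nonneg (x := v)]

variable {r s t : ℝ}

lemma neg_one_le_posLog_sub_interpolation (hr : 0 ≤ r) (hs : 0 ≤ s) (ht : r + s ≤ t)
    (hrt : r < t) :
    -1 ≤ log⁺ (r + s) - ((t - (r + s)) / (t - r) * log⁺ r + s / (t - r) * log⁺ t) := by
  have hw : 0 < t - r := sub_pos.2 hrt
  have hcomb : (t - (r + s)) / (t - r) * r + s / (t - r) * t = r + s := by
    field_simp
    ring
  have h := mul_posLog_add_mul_posLog_le (μ := (t - (r + s)) / (t - r)) (ν := s / (t - r)) hr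
    (hr.trans hrt.le) (div_nonneg (by linarith) hw.le) (div_nonneg hs hw.le)
    (by field_simp; ring)
  rw [hcomb] at h
  linarith [log_two_le_one]

lemma posLog_sub_interpolation_le (hr : 0 ≤ r) (hs : 0 ≤ s) (ht : r + s ≤ t) (hrt : r < t) :
    log⁺ (r + s) - ((t - (r + s)) / (t - r) * log⁺ r + s / (t - r) * log⁺ t)
      ≤ 1 + log⁺ (min s (t - r - s)) := by
  have hw : 0 < t - r := sub_pos.2 hrt
  set μ := (t - (r + s)) / (t - r) with hμ_def
  have hμν : s / (t - r) = 1 - μ := by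
    rw [hμ_def]
    field_simp
    ring
  have hμ : 0 ≤ μ := div_nonneg (by linarith) hw.le
  have hrt_log : log⁺ r ≤ log⁺ t := posLog_le_posLog hr hrt.le
  rw [hμν]
  have bound_s : log⁺ (r + s) - (μ * log⁺ r + (1 - μ) * log⁺ t) ≤ 1 + log⁺ s := by
    have hμ1 : 0 ≤ 1 - μ := by rw [← hμν]; exact div_nonneg hs hw.le
    have := posLog_add (x := r) (y := s)
    linarith [log_two_le_one, mul_nonneg hμ1 (sub_nonneg.2 hrt_log)]
  have bound_t_sub : log⁺ (r + s) - (μ * log⁺ r + (1 - μ) * log⁺ t)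
      ≤ 1 + log⁺ (t - r - s) := by
    have hsplit : log⁺ t - log⁺ r ≤ 1 + log⁺ (t - r) := by
      have := posLog_add (x := r) (y := t - r)
      rw [add_sub_cancel] at this
      linarith [log_two_le_one]
    have hscale : μ * (1 + log⁺ (t - r)) ≤ 1 + log⁺ (t - r - s) := by
      rw [hμ_def, ← sub_sub, div_mul_eq_mul_div, div_le_iff₀ hw, mul_comm (1 + _)]
      exact mul_one_add_posLog_le (by linarith) (by linarith)
    linarith [posLog_le_posLog (by linarith) ht, mul_le_mul_of_nonneg_left hsplit hμ]
  rcases le_total s (t - r - s) with h | h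
  · rwa [min_eq_left h]
  · rwa [min_eq_right h]

end Real

lemma logPlus_eq_posLog {x : ℝ} (hx : 0 ≤ x) : logPlus x = log⁺ x := by
  rw [logPlus, posLog_eq_log_max_one hx, max_comm]

/-- Deterministic concavity-type estimate comparing `log⁺` at an intermediate point `r+s`
with the linear interpolation between `log⁺ r` and `log⁺ t` over `[r, t]`. -/
theorem stmt_0 (s r t : ℝ) (hr : 0 ≤ r) (hs : r ≤ r + s) (ht : r + s ≤ t) (hrt : r < t) :
    -1 ≤ logPlus (r + s) -
        ((t - (r + s)) / (t - r) * logPlus r + s / (t - r) * logPlus t) ∧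
    logPlus (r + s) -
        ((t - (r + s)) / (t - r) * logPlus r + s / (t - r) * logPlus t)
      ≤ 1 + logPlus (min s (t - r - s)) := by
  have hs' : 0 ≤ s := by linarith
  rw [logPlus_eq_posLog hr, logPlus_eq_posLog (by linarith), logPlus_eq_posLog (by linarith),
    logPlus_eq_posLog (le_min hs' (by linarith))]
  exact ⟨neg_one_le_posLog_sub_interpolation hr hs' ht hrt,
    posLog_sub_interpolation_le hr hs' ht hrt⟩
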